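/- arXiv:1803.10023 — 3 statements merged into one kernel-verified Lean document; each statement's English description precedes it below -/
import Mathlib

section
/- Let E ⊂ ℝⁿ, θ ∈ Sⁿ⁻¹, α ∈ (0, π/2) and r > 0 be such that for every x ∈ E the set C(x,θ,α) ∩ B(x,r) ∩ E is empty, where C(x,θ,α) = {y : ⟨y−x,θ⟩ > cos(α)|y−x|}. Then for every x₀ ∈ ℝⁿ the set E ∩ B(x₀, r/2) is contained in a Lipschitz graph over the hyperplane θ^⊥; in particular, E is (n−1)-rectifiable. -/
open MeasureTheory Metric

def IsRectifiableOfDim (k : ℕ) {X : Type*} [MetricSpace X] (A : Set X) : Prop :=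
  ∃ (E : ℕ → Set (EuclideanSpace ℝ (Fin k))) (f : ℕ → EuclideanSpace ℝ (Fin k) → X),
    (∀ i, MeasurableSet (E i)) ∧ (∀ i, ∃ K : NNReal, LipschitzOnWith K (f i) (E i)) ∧
    A ⊆ ⋃ i, f i '' E i

/-- The open cone at `x` in direction `θ` with opening angle `α`. -/
def openCone {n : ℕ} (x θ : EuclideanSpace ℝ (Fin n)) (α : ℝ) :
    Set (EuclideanSpace ℝ (Fin n)) :=
  {y | (inner ℝ (y - x) θ : ℝ) > Real.cos α * ‖y - x‖}

/-!
Two points of `E` at distance less than `r` lie outside each other's cones, so their difference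
`w` satisfies `|⟪w, θ⟫| ≤ cos α ‖w‖`; by Pythagoras this means `|⟪w, θ⟫| ≤ cot α ‖P w‖`, where `P`
is the orthogonal projection onto `θᗮ`. Hence on a ball of radius `r / 2` the height `⟪x, θ⟫` is a
`cot α`-Lipschitz function of `P x`, and McShane's extension theorem extends it to all of `θᗮ`.
Countably many such balls, centred at a dense sequence, cover `E`.
-/

open Set Function Module Real
open scoped NNReal RealInnerProductSpace

theorem exists_lipschitzWith_eqOn_comp {X Y : Type*} [PseudoMetricSpace Y]
    {S : Set X} {p : X → Y} {h : X → ℝ} {K : ℝ≥0}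
    (hh : ∀ x ∈ S, ∀ y ∈ S, dist (h x) (h y) ≤ K * dist (p x) (p y)) :
    ∃ f : Y → ℝ, LipschitzWith K f ∧ EqOn h (f ∘ p) S := by
  rcases isEmpty_or_nonempty X with _ | _
  · exact ⟨0, (LipschitzWith.const 0).weaken (zero_le (a := K)), fun x => isEmptyElim x⟩
  obtain ⟨g, hg⟩ : ∃ g : Y → ℝ, ∀ x ∈ S, g (p x) = h x := by
    refine ⟨fun v => h (invFunOn p S v), fun x hx => ?_⟩
    have hex : ∃ a ∈ S, p a = p x := ⟨x, hx, rfl⟩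
    have := hh _ (invFunOn_mem hex) x hx
    rwa [invFunOn_eq hex, dist_self, mul_zero, dist_le_zero] at this
  have hlip : LipschitzOnWith K g (p '' S) := by
    refine LipschitzOnWith.of_dist_le_mul ?_
    rintro _ ⟨x, hx, rfl⟩ _ ⟨y, hy, rfl⟩
    rw [hg x hx, hg y hy]
    exact hh x hx y hy
  obtain ⟨f, hf, hfg⟩ := hlip.extend_real
  exact ⟨f, hf, fun x hx => (hg x hx).symm.trans (hfg (mem_image_of_mem p hx))⟩

theorem IsRectifiableOfDim.of_forall_ball_subset_range {X V : Type*} [MetricSpace X]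
    [TopologicalSpace.SeparableSpace X] [Nonempty X] [NormedAddCommGroup V] [InnerProductSpace ℝ V]
    [FiniteDimensional ℝ V] {k : ℕ} (hV : finrank ℝ V = k) {E : Set X} {ρ : ℝ} (hρ : 0 < ρ)
    (h : ∀ x₀, ∃ (g : V → X) (K : ℝ≥0), LipschitzWith K g ∧ E ∩ ball x₀ ρ ⊆ range g) :
    IsRectifiableOfDim k E := by
  choose g K hg hEg using h
  let u := TopologicalSpace.denseSeq X
  let e := ((stdOrthonormalBasis ℝ V).reindex (finCongr hV)).repr.symm
  refine ⟨fun _ => univ, fun i => g (u i) ∘ e, fun _ => .univ,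
    fun i => ⟨K (u i), by simpa using (hg (u i)).comp e.lipschitz⟩,
    fun x hx => ?_⟩
  obtain ⟨i, hi⟩ := (TopologicalSpace.denseRange_denseSeq X).exists_dist_lt x hρ
  obtain ⟨v, rfl⟩ := hEg (u i) ⟨hx, hi⟩
  exact mem_iUnion.2 ⟨i, e.symm v, trivial, by simp⟩

theorem LipschitzWith.graph {F : Type*} [SeminormedAddCommGroup F] [NormedSpace ℝ F]
    {V : Submodule ℝ F} {f : V → ℝ} {K : ℝ≥0} (hf : LipschitzWith K f) (θ : F) :
    LipschitzWith (1 + K * ‖θ‖₊) fun v : V => (v : F) + f v • θ := by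
  refine (LipschitzWith.subtype_val (V : Set F)).add <| .of_dist_le_mul fun a b => ?_
  rw [dist_eq_norm, ← sub_smul, norm_smul, ← dist_eq_norm, NNReal.coe_mul, mul_right_comm,
    coe_nnnorm]
  exact mul_le_mul_of_nonneg_right (hf.dist_le_mul a b) (norm_nonneg θ)

section InnerProductSpace

variable {F : Type*} [NormedAddCommGroup F] [InnerProductSpace ℝ F]

theorem finrank_orthogonal_span_singleton_eq_sub_one [FiniteDimensional ℝ F] {θ : F} (hθ : θ ≠ 0) :
    finrank ℝ (ℝ ∙ θ)ᗮ = finrank ℝ F - 1 := by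
  have : Nontrivial F := nontrivial_of_ne θ 0 hθ
  have := finrank_pos (R := ℝ) (M := F)
  exact Submodule.finrank_add_finrank_orthogonal' (by rw [finrank_span_singleton hθ]; omega)

theorem orthogonalProjectionOnto_add_inner_smul {θ : F} (hθ : ‖θ‖ = 1) (x : F) :
    ((ℝ ∙ θ)ᗮ.orthogonalProjectionOnto x : F) + ⟪x, θ⟫ • θ = x := by
  rw [← Submodule.starProjection_apply, real_inner_comm,
    ← Submodule.starProjection_unit_singleton ℝ hθ, add_comm]
  exact Submodule.starProjection_add_starProjection_orthogonal x

theorem norm_sq_eq_inner_sq_add_norm_sq_orthogonalProjectionOnto {θ : F} (hθ : ‖θ‖ = 1) (x : F) :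
    ‖x‖ ^ 2 = ⟪x, θ⟫ ^ 2 + ‖(ℝ ∙ θ)ᗮ.orthogonalProjectionOnto x‖ ^ 2 := by
  have : ‖(ℝ ∙ θ).orthogonalProjectionOnto x‖ = |⟪x, θ⟫| := by
    rw [← Submodule.norm_coe, ← Submodule.starProjection_apply,
      Submodule.starProjection_unit_singleton ℝ hθ, norm_smul, hθ, mul_one, real_inner_comm,
      Real.norm_eq_abs]
  rw [Submodule.norm_sq_eq_add_norm_sq_projection x (ℝ ∙ θ), this, sq_abs]

theorem abs_inner_le_cot_mul_norm_orthogonalProjectionOnto {θ w : F} (hθ : ‖θ‖ = 1) {α : ℝ}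
    (hα : α ∈ Ioo 0 (π / 2)) (hw : |⟪w, θ⟫| ≤ cos α * ‖w‖) :
    |⟪w, θ⟫| ≤ cot α * ‖(ℝ ∙ θ)ᗮ.orthogonalProjectionOnto w‖ := by
  have hs : 0 < sin α := sin_pos_of_pos_of_lt_pi hα.1 (hα.2.trans (by linarith [pi_pos]))
  have hc : 0 < cos α := cos_pos_of_mem_Ioo ⟨by linarith [hα.1, pi_pos], hα.2⟩
  have hsc := sin_sq_add_cos_sq α
  have hpyth := norm_sq_eq_inner_sq_add_norm_sq_orthogonalProjectionOnto hθ w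
  set t := |⟪w, θ⟫|
  set p := ‖(ℝ ∙ θ)ᗮ.orthogonalProjectionOnto w‖
  rw [← sq_abs ⟪w, θ⟫] at hpyth
  rw [cot_eq_cos_div_sin, div_mul_eq_mul_div, le_div_iff₀ hs]
  have ht : 0 ≤ t := abs_nonneg _
  have hp : 0 ≤ p := norm_nonneg _
  have : t ^ 2 ≤ cos α ^ 2 * ‖w‖ ^ 2 := by rw [← mul_pow]; exact pow_le_pow_left₀ ht hw 2
  -- with `‖w‖² = t² + p²` and `sin² + cos² = 1` this says `(t sin α)² ≤ (p cos α)²`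
  nlinarith [mul_nonneg hc.le hp, mul_nonneg ht hs.le]

theorem exists_lipschitzWith_subset_range_graph {θ : F} (hθ : ‖θ‖ = 1) {S : Set F} {K : ℝ≥0}
    (hS : ∀ x ∈ S, ∀ y ∈ S,
      |⟪x - y, θ⟫| ≤ K * ‖(ℝ ∙ θ)ᗮ.orthogonalProjectionOnto (x - y)‖) :
    ∃ f : (ℝ ∙ θ)ᗮ → ℝ, LipschitzWith K f ∧ S ⊆ range fun v : (ℝ ∙ θ)ᗮ => (v : F) + f v • θ := by
  obtain ⟨f, hf, hfS⟩ := exists_lipschitzWith_eqOn_comp (S := S)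
    (p := (ℝ ∙ θ)ᗮ.orthogonalProjectionOnto) (h := fun x => ⟪x, θ⟫) (K := K) <| by
      intro x hx y hy
      rw [Real.dist_eq, ← inner_sub_left, dist_eq_norm, ← map_sub]
      exact hS x hx y hy
  refine ⟨f, hf, fun x hx => ⟨(ℝ ∙ θ)ᗮ.orthogonalProjectionOnto x, ?_⟩⟩
  dsimp only
  rw [← show ⟪x, θ⟫ = f _ from hfS hx]
  exact orthogonalProjectionOnto_add_inner_smul hθ x

end InnerProductSpace

section Cone

variable {n : ℕ} {E : Set (EuclideanSpace ℝ (Fin n))} {θ : EuclideanSpace ℝ (Fin n)} {α r : ℝ}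

theorem inner_sub_le_of_openCone_inter_ball_eq_empty
    (hcone : ∀ x ∈ E, openCone x θ α ∩ ball x r ∩ E = ∅) {x y : EuclideanSpace ℝ (Fin n)}
    (hx : x ∈ E) (hy : y ∈ E) (hxy : dist y x < r) :
    ⟪y - x, θ⟫ ≤ cos α * ‖y - x‖ := by
  by_contra! h
  have : y ∈ openCone x θ α ∩ ball x r ∩ E := ⟨⟨h, hxy⟩, hy⟩
  simp [hcone x hx] at this

theorem abs_inner_sub_le_of_openCone_inter_ball_eq_empty
    (hcone : ∀ x ∈ E, openCone x θ α ∩ ball x r ∩ E = ∅) {x y : EuclideanSpace ℝ (Fin n)}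
    (hx : x ∈ E) (hy : y ∈ E) (hxy : dist x y < r) :
    |⟪x - y, θ⟫| ≤ cos α * ‖x - y‖ := by
  have hyx := inner_sub_le_of_openCone_inter_ball_eq_empty hcone hx hy (dist_comm x y ▸ hxy)
  rw [← neg_sub x y, inner_neg_left, norm_neg] at hyx
  exact abs_le.2 ⟨by linarith, inner_sub_le_of_openCone_inter_ball_eq_empty hcone hy hx hxy⟩

end Cone

theorem cone_condition_implies_lipschitz_graph {n : ℕ}
    (E : Set (EuclideanSpace ℝ (Fin n))) (θ : EuclideanSpace ℝ (Fin n)) (hθ : ‖θ‖ = 1)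
    (α : ℝ) (hα : α ∈ Set.Ioo 0 (Real.pi / 2)) (r : ℝ) (hr : 0 < r)
    (hcone : ∀ x ∈ E, openCone x θ α ∩ ball x r ∩ E = ∅) :
    (∀ x₀ : EuclideanSpace ℝ (Fin n),
      ∃ (f : (Submodule.span ℝ {θ})ᗮ → ℝ) (K : NNReal), LipschitzWith K f ∧
        E ∩ ball x₀ (r / 2) ⊆
          Set.range (fun v : (Submodule.span ℝ {θ})ᗮ =>
            (v : EuclideanSpace ℝ (Fin n)) + f v • θ)) ∧
    IsRectifiableOfDim (n - 1) E := by
  have hcot : 0 ≤ cot α := by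
    rw [cot_eq_cos_div_sin]
    exact div_nonneg (cos_nonneg_of_mem_Icc ⟨by linarith [hα.1, pi_pos], hα.2.le⟩)
      (sin_nonneg_of_nonneg_of_le_pi hα.1.le (by linarith [hα.2, pi_pos]))
  have hgraph (x₀ : EuclideanSpace ℝ (Fin n)) :=
    exists_lipschitzWith_subset_range_graph hθ (S := E ∩ ball x₀ (r / 2)) (K := (cot α).toNNReal)
      fun x hx y hy => by
        have hxy : dist x y < r := by
          linarith [dist_triangle_right x y x₀, mem_ball.1 hx.2, mem_ball.1 hy.2]
        rw [coe_toNNReal _ hcot]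
        exact abs_inner_le_cot_mul_norm_orthogonalProjectionOnto hθ hα
          (abs_inner_sub_le_of_openCone_inter_ball_eq_empty hcone hx.1 hy.1 hxy)
  refine ⟨fun x₀ => (hgraph x₀).imp fun f hf => ⟨_, hf⟩, ?_⟩
  have hrank : finrank ℝ (ℝ ∙ θ)ᗮ = n - 1 := by
    rw [finrank_orthogonal_span_singleton_eq_sub_one (norm_ne_zero_iff.1 (by simp [hθ])),
      finrank_euclideanSpace_fin]
  refine .of_forall_ball_subset_range hrank (half_pos hr) fun x₀ => ?_
  obtain ⟨f, hf, hEf⟩ := hgraph x₀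
  exact ⟨_, _, hf.graph θ, hEf⟩
end

section
/- Let X be a complete separable geodesic metric space and let Γ ⊂ X × X be a c-cyclically monotone set for the cost c(x,y) = d(x,y)². Then for every t ∈ [0,1] the set Γ_t = {(γ(0), γ(t)) : γ is a constant-speed geodesic from [0,1] to X with (γ(0), γ(1)) ∈ Γ} is c-cyclically monotone. -/
open Set

/-- A constant-speed geodesic parametrized by `[0,1]`. -/
def IsGeodesic {X : Type*} [MetricSpace X] (γ : ℝ → X) : Prop :=
  ∀ s ∈ Icc (0 : ℝ) 1, ∀ t ∈ Icc (0 : ℝ) 1,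
    dist (γ s) (γ t) = |s - t| * dist (γ 0) (γ 1)

/-- c-cyclical monotonicity for the cost `c = d²`. -/
def CyclicallyMonotone {X : Type*} [MetricSpace X] (Γ : Set (X × X)) : Prop :=
  ∀ (N : ℕ) (x y : Fin N → X), (∀ i, (x i, y i) ∈ Γ) → ∀ σ : Equiv.Perm (Fin N),
    ∑ i, dist (x i) (y i) ^ 2 ≤ ∑ i, dist (x (σ i)) (y i) ^ 2

/-
For a geodesic `γ` and any point `p`, the triangle inequality through `γ t` together with the
convexity of the square gives `t d(p, γ 1)² ≤ d(p, γ t)² + t (1 - t) d(γ 0, γ 1)²`. Summing this over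
a cycle with `p` ranging over the permuted starting points, and using cyclical monotonicity of the
endpoint pairs, bounds the permuted cost at time `t` from below by
`t Σ d(γᵢ 0, γᵢ 1)² - t (1 - t) Σ d(γᵢ 0, γᵢ 1)² = t² Σ d(γᵢ 0, γᵢ 1)²`, which is the unpermuted
cost at time `t`.
-/

theorem mul_sq_le_sq_add_of_le_add {a b c t : ℝ} (ht₀ : 0 ≤ t) (ht₁ : t ≤ 1) (ha : 0 ≤ a)
    (h : a ≤ c + (1 - t) * b) : t * a ^ 2 ≤ c ^ 2 + t * (1 - t) * b ^ 2 :=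
  calc t * a ^ 2 ≤ t * (c + (1 - t) * b) ^ 2 := by gcongr
    _ = c ^ 2 + t * (1 - t) * b ^ 2 - (1 - t) * (c - t * b) ^ 2 := by ring
    _ ≤ c ^ 2 + t * (1 - t) * b ^ 2 := sub_le_self _ (mul_nonneg (sub_nonneg.2 ht₁) (sq_nonneg _))

namespace IsGeodesic

variable {X : Type*} [MetricSpace X] {γ : ℝ → X} {t : ℝ}

theorem dist_zero_apply (hγ : IsGeodesic γ) (ht : t ∈ Icc (0 : ℝ) 1) :
    dist (γ 0) (γ t) = t * dist (γ 0) (γ 1) := by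
  rw [hγ 0 (left_mem_Icc.2 zero_le_one) t ht, zero_sub, abs_neg, abs_of_nonneg ht.1]

theorem dist_apply_one (hγ : IsGeodesic γ) (ht : t ∈ Icc (0 : ℝ) 1) :
    dist (γ t) (γ 1) = (1 - t) * dist (γ 0) (γ 1) := by
  rw [hγ t ht 1 (right_mem_Icc.2 zero_le_one), abs_sub_comm, abs_of_nonneg (sub_nonneg.2 ht.2)]

theorem mul_dist_sq_le (hγ : IsGeodesic γ) (ht : t ∈ Icc (0 : ℝ) 1) (p : X) :
    t * dist p (γ 1) ^ 2 ≤ dist p (γ t) ^ 2 + t * (1 - t) * dist (γ 0) (γ 1) ^ 2 := by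
  refine mul_sq_le_sq_add_of_le_add ht.1 ht.2 dist_nonneg ?_
  calc dist p (γ 1) ≤ dist p (γ t) + dist (γ t) (γ 1) := dist_triangle _ _ _
    _ = dist p (γ t) + (1 - t) * dist (γ 0) (γ 1) := by rw [hγ.dist_apply_one ht]

end IsGeodesic

theorem cyclically_monotone_interpolation_general {X : Type*} [MetricSpace X]
    (Γ : Set (X × X)) (hΓ : CyclicallyMonotone Γ) (t : ℝ) (ht : t ∈ Icc (0 : ℝ) 1) :
    CyclicallyMonotone {p : X × X |
      ∃ γ : ℝ → X, IsGeodesic γ ∧ (γ 0, γ 1) ∈ Γ ∧ p = (γ 0, γ t)} := by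
  intro N x y hxy σ
  choose γ hγ hγΓ hxyγ using hxy
  obtain rfl : x = fun i => γ i 0 := funext fun i => congrArg Prod.fst (hxyγ i)
  obtain rfl : y = fun i => γ i t := funext fun i => congrArg Prod.snd (hxyγ i)
  have hend := hΓ N (fun i => γ i 0) (fun i => γ i 1) hγΓ σ
  calc ∑ i, dist (γ i 0) (γ i t) ^ 2
      = t * ∑ i, dist (γ i 0) (γ i 1) ^ 2 - t * (1 - t) * ∑ i, dist (γ i 0) (γ i 1) ^ 2 := by
        simp only [(hγ _).dist_zero_apply ht, mul_pow, ← Finset.mul_sum]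
        ring
    _ ≤ t * ∑ i, dist (γ (σ i) 0) (γ i 1) ^ 2 - t * (1 - t) * ∑ i, dist (γ i 0) (γ i 1) ^ 2 := by
        gcongr
        exact ht.1
    _ = ∑ i, (t * dist (γ (σ i) 0) (γ i 1) ^ 2 - t * (1 - t) * dist (γ i 0) (γ i 1) ^ 2) := by
        rw [Finset.sum_sub_distrib, Finset.mul_sum, Finset.mul_sum]
    _ ≤ ∑ i, dist (γ (σ i) 0) (γ i t) ^ 2 :=
        Finset.sum_le_sum fun i _ => by linarith [(hγ i).mul_dist_sq_le ht (γ (σ i) 0)]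

theorem cyclically_monotone_interpolation {X : Type*} [MetricSpace X] [CompleteSpace X]
    [TopologicalSpace.SeparableSpace X]
    (hgeo : ∀ x y : X, ∃ γ : ℝ → X, IsGeodesic γ ∧ γ 0 = x ∧ γ 1 = y)
    (Γ : Set (X × X)) (hΓ : CyclicallyMonotone Γ) (t : ℝ) (ht : t ∈ Icc (0 : ℝ) 1) :
    CyclicallyMonotone {p : X × X |
      ∃ γ : ℝ → X, IsGeodesic γ ∧ (γ 0, γ 1) ∈ Γ ∧ p = (γ 0, γ t)} :=
  cyclically_monotone_interpolation_general Γ hΓ t ht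
end

section
/- Let X be a Polish space, π a Borel probability measure on X × X with first marginal μ₀, and define A = {x ∈ X : there exist y¹ ≠ y² with (x, y¹), (x, y²) ∈ spt(π)}. If μ₀(A) = 0 and there exists a Borel map T : p₁(spt(π)) → X with (x, T(x)) ∈ spt(π) for all x in the first-coordinate projection p₁(spt(π)) of spt(π), then π = (id, T)_♯ μ₀, i.e., π is induced by the map T. -/
/-!
A plan is concentrated on its support, and outside the μ₀-null set `A` the fibre of the
support over `x` is the single point `T x`. Hence `y = T x` for π-a.e. `(x, y)`, so π agrees
with the pushforward of its first marginal under `x ↦ (x, T x)`.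
-/

open MeasureTheory

/-- The support of a measure on a metric space. -/
def measureSupport {Y : Type*} [MetricSpace Y] [MeasurableSpace Y]
    (π : Measure Y) : Set Y :=
  {p | ∀ ε > (0 : ℝ), 0 < π (Metric.ball p ε)}

theorem measureSupport_eq_support {Y : Type*} [MetricSpace Y] [MeasurableSpace Y]
    (π : Measure Y) : measureSupport π = π.support := by
  ext p
  exact (Metric.nhds_basis_ball.mem_measureSupport (μ := π)).symm

theorem measureSupport_mem_ae {Y : Type*} [MetricSpace Y] [MeasurableSpace Y]
    [HereditarilyLindelofSpace Y] (π : Measure Y) : measureSupport π ∈ ae π :=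
  measureSupport_eq_support π ▸ Measure.support_mem_ae

theorem MeasureTheory.Measure.eq_map_prodMk_of_ae_snd_eq {α β : Type*} [MeasurableSpace α]
    [MeasurableSpace β] {μ : Measure (α × β)} {f : α → β} (hf : Measurable f)
    (h : ∀ᵐ p ∂μ, p.2 = f p.1) : μ = (μ.map Prod.fst).map (fun x => (x, f x)) := by
  have hgraph : (fun p : α × β => p) =ᵐ[μ] fun p => (p.1, f p.1) := by
    filter_upwards [h] with p hp
    exact Prod.ext rfl hp
  calc μ = μ.map (fun p => p) := Measure.map_id.symm
    _ = μ.map (fun p => (p.1, f p.1)) := Measure.map_congr hgraph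
    _ = (μ.map Prod.fst).map (fun x => (x, f x)) :=
        (Measure.map_map (measurable_id.prodMk hf) measurable_fst).symm

theorem plan_induced_by_selection_general {X : Type*} [MetricSpace X]
    [TopologicalSpace.SeparableSpace X]
    [MeasurableSpace X]
    (π : Measure (X × X))
    (μ₀ : Measure X) (hμ₀ : π.map Prod.fst = μ₀)
    (hA : μ₀ {x : X | ∃ y₁ y₂ : X, y₁ ≠ y₂ ∧
      (x, y₁) ∈ measureSupport π ∧ (x, y₂) ∈ measureSupport π} = 0)
    (T : X → X) (hT : Measurable T)
    (hTsel : ∀ x ∈ Prod.fst '' measureSupport π, (x, T x) ∈ measureSupport π) :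
    π = μ₀.map (fun x => (x, T x)) := by
  subst hμ₀
  refine Measure.eq_map_prodMk_of_ae_snd_eq hT ?_
  have hfiber : ∀ᵐ p ∂π, ¬∃ y₁ y₂ : X, y₁ ≠ y₂ ∧
      (p.1, y₁) ∈ measureSupport π ∧ (p.1, y₂) ∈ measureSupport π :=
    ae_of_ae_map measurable_fst.aemeasurable (measure_eq_zero_iff_ae_notMem.1 hA)
  filter_upwards [measureSupport_mem_ae π, hfiber] with p hp hpA
  by_contra hne
  exact hpA ⟨p.2, T p.1, hne, hp, hTsel _ ⟨p, hp, rfl⟩⟩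

theorem plan_induced_by_selection {X : Type*} [MetricSpace X]
    [TopologicalSpace.SeparableSpace X] [CompleteSpace X]
    [MeasurableSpace X] [BorelSpace X]
    (π : Measure (X × X)) [IsProbabilityMeasure π]
    (μ₀ : Measure X) (hμ₀ : π.map Prod.fst = μ₀)
    (hA : μ₀ {x : X | ∃ y₁ y₂ : X, y₁ ≠ y₂ ∧
      (x, y₁) ∈ measureSupport π ∧ (x, y₂) ∈ measureSupport π} = 0)
    (T : X → X) (hT : Measurable T)
    (hTsel : ∀ x ∈ Prod.fst '' measureSupport π, (x, T x) ∈ measureSupport π) :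
    π = μ₀.map (fun x => (x, T x)) :=
  plan_induced_by_selection_general π μ₀ hμ₀ hA T hT hTsel
end
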